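/- arXiv:1710.09809 — 2 statements merged into one kernel-verified Lean document; each statement's English description precedes it below -/
import Mathlib

section
/- Let t, c ∈ R^m with ‖t‖ = 1 and δ ∈ [-1, 1]. Then the maximum of ⟨a, c⟩ over the dome T^d(t, δ) = {a : ⟨a, t⟩ ≥ δ, ‖a‖ ≤ 1} equals max_{δ ≤ α ≤ 1} ( α⟨t, c⟩ + √(1 - α²)·‖P(c)‖ ), where P(c) = c - ⟨t, c⟩t is the projection of c onto the orthogonal complement of t. -/
/-!
Split every vector along the unit vector `t` and its orthogonal complement. For `‖a‖ ≤ 1` with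
`⟪t, a⟫ = α`, the orthogonal part of `a` has norm at most `√(1 - α²)`, so Cauchy–Schwarz in the
complement bounds `⟪a, c⟫` by `α ⟪t, c⟫ + √(1 - α²) ‖P c‖`; the bound is attained at
`a = α t + √(1 - α²) ‖P c‖⁻¹ P c`. Hence both suprema bound each other.
-/

open RealInnerProductSpace

section UnitVector

variable {E : Type*} [NormedAddCommGroup E] [InnerProductSpace ℝ E] {t : E}

theorem inner_sub_inner_smul_eq_zero (ht : ‖t‖ = 1) (x : E) : ⟪t, x - ⟪t, x⟫ • t⟫ = 0 := by
  rw [inner_sub_right, real_inner_smul_right, inner_self_eq_one_of_norm_eq_one ht, mul_one,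
    sub_self]

theorem norm_sq_eq_inner_sq_add_norm_sub_sq (ht : ‖t‖ = 1) (x : E) :
    ‖x‖ ^ 2 = ⟪t, x⟫ ^ 2 + ‖x - ⟪t, x⟫ • t‖ ^ 2 := by
  have horth : ⟪⟪t, x⟫ • t, x - ⟪t, x⟫ • t⟫ = 0 := by
    rw [real_inner_smul_left, inner_sub_inner_smul_eq_zero ht, mul_zero]
  conv_lhs => rw [← add_sub_cancel (⟪t, x⟫ • t) x]
  rw [norm_add_sq_real, horth, norm_smul, ht, mul_one, Real.norm_eq_abs, sq_abs, mul_zero,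
    add_zero]

theorem inner_eq_mul_add_inner_sub (ht : ‖t‖ = 1) (a c : E) :
    ⟪a, c⟫ = ⟪t, a⟫ * ⟪t, c⟫ + ⟪a - ⟪t, a⟫ • t, c - ⟪t, c⟫ • t⟫ := by
  simp only [inner_sub_left, inner_sub_right, real_inner_smul_left, real_inner_smul_right,
    inner_self_eq_one_of_norm_eq_one ht, real_inner_comm a t, real_inner_comm c t]
  ring

theorem inner_le_of_norm_le_one (ht : ‖t‖ = 1) {a : E} (ha : ‖a‖ ≤ 1) (c : E) :
    ⟪a, c⟫ ≤ ⟪t, a⟫ * ⟪t, c⟫ + √(1 - ⟪t, a⟫ ^ 2) * ‖c - ⟪t, c⟫ • t‖ := by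
  have hw : ‖a - ⟪t, a⟫ • t‖ ≤ √(1 - ⟪t, a⟫ ^ 2) := by
    apply Real.le_sqrt_of_sq_le
    have := norm_sq_eq_inner_sq_add_norm_sub_sq ht a
    nlinarith [norm_nonneg a]
  rw [inner_eq_mul_add_inner_sub ht a c, add_le_add_iff_left]
  calc ⟪a - ⟪t, a⟫ • t, c - ⟪t, c⟫ • t⟫ ≤ ‖a - ⟪t, a⟫ • t‖ * ‖c - ⟪t, c⟫ • t‖ :=
        real_inner_le_norm _ _
    _ ≤ √(1 - ⟪t, a⟫ ^ 2) * ‖c - ⟪t, c⟫ • t‖ := by gcongr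

theorem exists_inner_eq_of_mem_Icc (ht : ‖t‖ = 1) (c : E) {α : ℝ} (hα : α ∈ Set.Icc (-1 : ℝ) 1) :
    ∃ a : E, ‖a‖ ≤ 1 ∧ ⟪t, a⟫ = α ∧
      ⟪a, c⟫ = α * ⟪t, c⟫ + √(1 - α ^ 2) * ‖c - ⟪t, c⟫ • t‖ := by
  set p := c - ⟪t, c⟫ • t
  set s := √(1 - α ^ 2)
  have htp : ⟪t, p⟫ = 0 := inner_sub_inner_smul_eq_zero ht c
  have hs : s ^ 2 = 1 - α ^ 2 := Real.sq_sqrt (by nlinarith [hα.1, hα.2])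
  -- `‖p‖⁻¹ • p` is a unit vector, or zero when `p = 0`; either way the formulas below hold.
  have hu : ‖‖p‖⁻¹ • p‖ ≤ 1 := by
    rw [norm_smul, norm_inv, norm_norm]
    exact inv_mul_le_one
  have hta : ⟪t, α • t + s • ‖p‖⁻¹ • p⟫ = α := by
    rw [inner_add_right, real_inner_smul_right, real_inner_smul_right, real_inner_smul_right,
      htp, inner_self_eq_one_of_norm_eq_one ht]
    ring
  refine ⟨α • t + s • ‖p‖⁻¹ • p, ?_, hta, ?_⟩
  · have hsq := norm_sq_eq_inner_sq_add_norm_sub_sq ht (α • t + s • ‖p‖⁻¹ • p)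
    rw [hta, add_sub_cancel_left, norm_smul, Real.norm_of_nonneg (Real.sqrt_nonneg _), mul_pow,
      hs] at hsq
    have : ‖‖p‖⁻¹ • p‖ ^ 2 ≤ 1 := pow_le_one₀ (norm_nonneg _) hu
    nlinarith [norm_nonneg (α • t + s • ‖p‖⁻¹ • p), hs ▸ sq_nonneg s]
  · have hpc : ⟪p, c⟫ = ‖p‖ ^ 2 := by
      rw [← real_inner_self_eq_norm_sq, inner_sub_right, real_inner_smul_right,
        real_inner_comm t p, htp, mul_zero, sub_zero]
    rw [inner_add_left, real_inner_smul_left, real_inner_smul_left, real_inner_smul_left, hpc]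
    rcases eq_or_ne ‖p‖ 0 with hp | hp
    · simp [hp]
    · field_simp

end UnitVector

theorem dome_max_reduction (m : ℕ) (t c : EuclideanSpace ℝ (Fin m)) (δ : ℝ)
    (ht : ‖t‖ = 1) (hδ : δ ∈ Set.Icc (-1 : ℝ) 1) :
    sSup ((fun a => (inner ℝ a c : ℝ)) ''
        {a : EuclideanSpace ℝ (Fin m) | δ ≤ (inner ℝ a t : ℝ) ∧ ‖a‖ ≤ 1}) =
      sSup ((fun α => α * (inner ℝ t c : ℝ) +
        Real.sqrt (1 - α ^ 2) * ‖c - (inner ℝ t c : ℝ) • t‖) '' Set.Icc δ 1) := by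
  apply csSup_eq_csSup_of_forall_exists_le
  · rintro _ ⟨a, ⟨hδa, ha⟩, rfl⟩
    have hta : ⟪t, a⟫ ≤ 1 :=
      (real_inner_le_norm t a).trans (by rw [ht, one_mul]; exact ha)
    exact ⟨_, ⟨⟪t, a⟫, ⟨real_inner_comm t a ▸ hδa, hta⟩, rfl⟩, inner_le_of_norm_le_one ht ha c⟩
  · rintro _ ⟨α, ⟨hδα, hα⟩, rfl⟩
    obtain ⟨a, ha, hta, hac⟩ := exists_inner_eq_of_mem_Icc ht c ⟨hδ.1.trans hδα, hα⟩
    exact ⟨_, ⟨a, ⟨by rw [real_inner_comm, hta]; exact hδα, ha⟩, rfl⟩, hac.ge⟩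
end

section
/- Let A ∈ R^{m×n} with columns a_i, y ∈ R^m, λ > 0, and let x* ≥ 0 minimize P(x) = (1/2)‖y - Ax‖² + λ‖x‖₁ over the nonnegative orthant. Define θ* = (y - Ax*)/λ. If G ⊆ R^m and R ⊆ R^m is any set containing θ* such that sup_{a ∈ G} sup_{θ ∈ R} ⟨a, θ⟩ < 1, then x*(i) = 0 for every index i with a_i ∈ G. -/
/-!
Decreasing a positive coordinate `x i` by a small `t > 0` keeps `x` feasible and changes the
objective by `t (⟪a i, r⟫ - λ) + t² ‖a i‖² / 2`, where `r = y - A x` is the residual.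
Minimality forces `λ ≤ ⟪a i, r⟫`, i.e. `⟪a i, θ*⟫ ≥ 1`, which the screening bound forbids
for `a i ∈ G`.
-/

open Finset Filter Topology RealInnerProductSpace

lemma le_of_forall_mem_Ioc_le_add_mul {a b K s : ℝ} (hs : 0 < s)
    (h : ∀ t ∈ Set.Ioc 0 s, a ≤ b + t * K) : a ≤ b := by
  have hlim : Tendsto (fun t : ℝ => b + t * K) (𝓝[>] 0) (𝓝 b) := by
    have hcont : Continuous fun t : ℝ => b + t * K := by fun_prop
    simpa using (hcont.tendsto 0).mono_left nhdsWithin_le_nhds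
  exact ge_of_tendsto hlim (eventually_of_mem (Ioc_mem_nhdsGT hs) h)

lemma sub_single_nonneg {ι : Type*} [DecidableEq ι] {x : ι → ℝ} {i : ι} {t : ℝ} (hx : 0 ≤ x)
    (ht : t ≤ x i) :
    0 ≤ x - Pi.single i t := by
  rw [sub_nonneg]
  intro j
  by_cases hj : j = i
  · subst hj; simpa using ht
  · simpa [hj] using hx j

section Lasso

variable {ι E : Type*} [Fintype ι] [DecidableEq ι]
  [NormedAddCommGroup E] [InnerProductSpace ℝ E]

noncomputable def lassoObjective (a : ι → E) (y : E) (lam : ℝ) (x : ι → ℝ) : ℝ :=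
  1 / 2 * ‖y - ∑ i, x i • a i‖ ^ 2 + lam * ∑ i, |x i|

lemma sum_sub_single_smul (a : ι → E) (x : ι → ℝ) (i : ι) (t : ℝ) :
    ∑ j, ((x - Pi.single i t : ι → ℝ) j) • a j = ∑ j, x j • a j - t • a i := by
  simp only [Pi.sub_apply, sub_smul, sum_sub_distrib, Pi.single_apply, ite_smul, zero_smul,
    sum_ite_eq', mem_univ, if_true]

lemma sum_abs_sub_single {x : ι → ℝ} {i : ι} {t : ℝ} (hx : 0 ≤ x) (ht : t ≤ x i) :
    ∑ j, |((x - Pi.single i t : ι → ℝ) j)| = ∑ j, |x j| - t := by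
  have hxt := sub_single_nonneg hx ht
  simp only [abs_of_nonneg (hxt _), abs_of_nonneg (hx _)]
  simp only [Pi.sub_apply, sum_sub_distrib, Finset.sum_pi_single', mem_univ, if_true]

lemma lassoObjective_sub_single {a : ι → E} {y : E} {lam : ℝ} {x : ι → ℝ} {i : ι} {t : ℝ}
    (hx : 0 ≤ x) (ht : t ≤ x i) :
    lassoObjective a y lam (x - Pi.single i t) = lassoObjective a y lam x
      + t * (⟪a i, y - ∑ j, x j • a j⟫ - lam) + t ^ 2 / 2 * ‖a i‖ ^ 2 := by
  have hres : y - ∑ j, ((x - Pi.single i t : ι → ℝ) j) • a j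
      = (y - ∑ j, x j • a j) + t • a i := by
    rw [sum_sub_single_smul]; abel
  rw [lassoObjective, lassoObjective, hres, sum_abs_sub_single hx ht, norm_add_sq_real,
    real_inner_smul_right, norm_smul, real_inner_comm, mul_pow, Real.norm_eq_abs, sq_abs]
  ring

lemma le_inner_residual_of_isMinOn {a : ι → E} {y : E} {lam : ℝ} {x : ι → ℝ}
    (hmin : IsMinOn (lassoObjective a y lam) (Set.Ici 0) x) (hx : 0 ≤ x) {i : ι}
    (hi : 0 < x i) : lam ≤ ⟪a i, y - ∑ j, x j • a j⟫ := by
  refine le_of_forall_mem_Ioc_le_add_mul (K := ‖a i‖ ^ 2 / 2) hi fun t ⟨ht0, htx⟩ => ?_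
  have hle := hmin (sub_single_nonneg hx htx)
  rw [Set.mem_ofPred_eq, lassoObjective_sub_single hx htx] at hle
  have hprod : 0 ≤ t * (⟪a i, y - ∑ j, x j • a j⟫ + t * (‖a i‖ ^ 2 / 2) - lam) := by linarith
  linarith [nonneg_of_mul_nonneg_right hprod ht0]

end Lasso

theorem joint_screening_safe (m n : ℕ) (a : Fin n → EuclideanSpace ℝ (Fin m))
    (y : EuclideanSpace ℝ (Fin m)) (lam : ℝ) (hlam : 0 < lam)
    (x : Fin n → ℝ) (hx : ∀ i, 0 ≤ x i)
    (hmin : ∀ x' : Fin n → ℝ, (∀ i, 0 ≤ x' i) →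
      (1 / 2) * ‖y - ∑ i, x i • a i‖ ^ 2 + lam * ∑ i, |x i| ≤
        (1 / 2) * ‖y - ∑ i, x' i • a i‖ ^ 2 + lam * ∑ i, |x' i|)
    (G R : Set (EuclideanSpace ℝ (Fin m)))
    (hθR : lam⁻¹ • (y - ∑ i, x i • a i) ∈ R)
    (hsup : (⨆ aa ∈ G, ⨆ θ ∈ R, ((inner ℝ aa θ : ℝ) : EReal)) < 1) :
    ∀ i, a i ∈ G → x i = 0 := by
  intro i hiG
  by_contra hne
  have hkkt : lam ≤ ⟪a i, y - ∑ j, x j • a j⟫ :=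
    le_inner_residual_of_isMinOn hmin hx ((hx i).lt_of_ne' hne)
  have hscreen : ⟪a i, lam⁻¹ • (y - ∑ j, x j • a j)⟫ < 1 := by
    have hle : ((⟪a i, lam⁻¹ • (y - ∑ j, x j • a j)⟫ : ℝ) : EReal)
        ≤ ⨆ aa ∈ G, ⨆ θ ∈ R, ((⟪aa, θ⟫ : ℝ) : EReal) :=
      le_iSup₂_of_le (a i) hiG (le_iSup₂ (f := fun θ _ => ((⟪a i, θ⟫ : ℝ) : EReal)) _ hθR)
    exact_mod_cast hle.trans_lt hsup
  rw [real_inner_smul_right, inv_mul_lt_one₀ hlam] at hscreen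
  exact hkkt.not_gt hscreen
end
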